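/- arXiv:2407.15533 — 3 statements merged into one kernel-verified Lean document; each statement's English description precedes it below -/
import Mathlib

section
/- Let $h : \{0,1\}^{\le M} \to \mathbb{R}$ be harmonic on the binary tree, i.e., $h(z0) + h(z1) + h(z') = 3h(z)$ for every internal vertex $z$ of depth $1 \le n < M$ with parent $z'$, with $h(\emptyset) = 0$. Define increments $a(z) = h(z) - h(\text{parent}(z))$ and $\Sigma(z) = \sum_{y} u(zy)$ over all leaf-extensions $y$ of length $M - |z|$, where $u = h|_{\text{leaves}}$. Then for every vertex $z$ of depth $n$ ($1 \le n \le M$): $\Sigma(z) = 2^{M-n}\sum_{j=1}^{n-1} a(z^{(j)}) + (2^{M-n+1}-1)\, a(z)$, where $z^{(j)}$ denotes the depth-$j$ ancestor of $z$. -/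
/-!
Summing `h` over the `2^k` descendants of `z` at distance `k` gives
`Σ_k(z) = 2^k h(z) + (2^k - 1) a(z)`, by induction on `k`: `Σ_{k+1}(z) = Σ_k(z0) + Σ_k(z1)`, and
`h(z0) + h(z1) = 2 h(z) + a(z)` by harmonicity. The stated form follows since `h(z) - a(z) = h(parent z)`
telescopes to the sum of the increments along the ancestors of `z`.
-/

open Finset

theorem List.sum_ofFn_succ {α M : Type*} [Fintype α] [AddCommMonoid M] (f : List α → M) (k : ℕ) :
    ∑ y : Fin (k + 1) → α, f (List.ofFn y) = ∑ b, ∑ y : Fin k → α, f (b :: List.ofFn y) := by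
  rw [← (Fin.consEquiv fun _ => α).sum_comp, Fintype.sum_prod_type]
  simp [Fin.consEquiv, List.ofFn_succ]

theorem List.dropLast_take_succ {α : Type*} (l : List α) {n : ℕ} (hn : n < l.length) :
    (l.take (n + 1)).dropLast = l.take n := by
  rw [List.dropLast_eq_take, List.length_take, List.take_take]
  congr
  omega

theorem List.sum_Icc_sub_dropLast_take {α G : Type*} [AddCommGroup G] (f : List α → G)
    (l : List α) {n : ℕ} (hn : n ≤ l.length) :
    ∑ j ∈ Icc 1 n, (f (l.take j) - f (l.take j).dropLast) = f (l.take n) - f [] := by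
  induction n with
  | zero => simp
  | succ n ih =>
    rw [sum_Icc_succ_top (by omega), ih (by omega), l.dropLast_take_succ (by omega)]
    abel

theorem sum_extensions_of_harmonic {R : Type*} [CommRing R] (h : List Bool → R) (k : ℕ)
    (z : List Bool)
    (hharm : ∀ w : List Bool, z.length ≤ w.length → w.length < z.length + k →
      h (w ++ [false]) + h (w ++ [true]) + h w.dropLast = 3 * h w) :
    ∑ y : Fin k → Bool, h (z ++ List.ofFn y) = 2 ^ k * h z + (2 ^ k - 1) * (h z - h z.dropLast) := by
  induction k generalizing z with
  | zero => simp
  | succ k ih =>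
    have hchild (b : Bool) :
        ∑ y : Fin k → Bool, h (z ++ b :: List.ofFn y)
          = 2 ^ k * h (z ++ [b]) + (2 ^ k - 1) * (h (z ++ [b]) - h z) := by
      simpa [List.dropLast_concat] using
        ih (z ++ [b]) fun w hw hw' => hharm w (by simp at hw; omega) (by simp at hw'; omega)
    rw [List.sum_ofFn_succ (fun l => h (z ++ l)), Fintype.sum_bool, hchild, hchild]
    linear_combination (2 ^ (k + 1) - 1) * hharm z le_rfl (by omega)

theorem stmt_14_general (M : ℕ) (h : List Bool → ℝ) (hroot : h [] = 0)
    (hharm : ∀ z : List Bool, 1 ≤ z.length → z.length < M →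
      h (z ++ [false]) + h (z ++ [true]) + h z.dropLast = 3 * h z)
    (a : List Bool → ℝ) (ha : ∀ z, a z = h z - h z.dropLast)
    (z : List Bool) (hn1 : 1 ≤ z.length) (hnM : z.length ≤ M) :
    (∑ y : Fin (M - z.length) → Bool, h (z ++ List.ofFn y))
      = 2 ^ (M - z.length) * (∑ j ∈ Finset.Icc 1 (z.length - 1), a (z.take j))
        + ((2:ℝ) ^ (M - z.length + 1) - 1) * a z := by
  obtain ⟨k, rfl⟩ := Nat.exists_eq_add_of_le hnM
  have hparent : ∑ j ∈ Icc 1 (z.length - 1), a (z.take j) = h z.dropLast := by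
    simp_rw [ha]
    rw [z.sum_Icc_sub_dropLast_take h (by omega), ← List.dropLast_eq_take, hroot, sub_zero]
  rw [Nat.add_sub_cancel_left, hparent, ha,
    sum_extensions_of_harmonic h k z fun w hw hw' => hharm w (by omega) hw']
  ring

theorem stmt_14 (M : ℕ) (hM : 1 ≤ M) (h : List Bool → ℝ) (hroot : h [] = 0)
    (hharm : ∀ z : List Bool, 1 ≤ z.length → z.length < M →
      h (z ++ [false]) + h (z ++ [true]) + h z.dropLast = 3 * h z)
    (a : List Bool → ℝ) (ha : ∀ z, a z = h z - h z.dropLast)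
    (z : List Bool) (hn1 : 1 ≤ z.length) (hnM : z.length ≤ M) :
    (∑ y : Fin (M - z.length) → Bool, h (z ++ List.ofFn y))
      = 2 ^ (M - z.length) * (∑ j ∈ Finset.Icc 1 (z.length - 1), a (z.take j))
        + ((2:ℝ) ^ (M - z.length + 1) - 1) * a z :=
  stmt_14_general M h hroot hharm a ha z hn1 hnM
end

section
/- Let $M \ge 2$, $\epsilon > 0$, and let $h$ be the solution of the tree Dirichlet problem on the binary tree of depth $M$ with $h(\emptyset) = 0$ and boundary condition $u(z) = \epsilon\sum_{\ell=2}^M 2^{M-\ell}z_\ell + \frac{\epsilon}{2}$ if $z_1 = 1$ and $u(z) = -\epsilon\sum_{\ell=2}^M 2^{M-\ell}z_\ell - \frac{\epsilon}{2}$ if $z_1 = 0$. Then for every $1 \le n \le M$ and all distinct vertices $z \ne y$ of depth $n$, $|h(z) - h(y)| \ge \epsilon$. -/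
/-!
The boundary data are `ε * signedValue`, where `signedValue z = ±(t + 1/2)` with `t` the binary
number formed by the bits of `z` after the first. Children of a vertex `p` sit at
`2 * signedValue p ± 1/2`, so on every level `signedValue` is a half-integer labelling whose
distinct values are at least `1` apart and whose order is inherited by the parents.
The function `V z = ε * 4 ^ (M - |z|) * signedValue z` is additive down the tree and equals the
boundary data on the leaves; eliminating the children level by level turns the harmonic equation
into the first-order relation `(2^(k+1) - 1) h z = (2^k - 1) h (parent z) + V z` at height `k`.
Induction on depth then gives `ε (signedValue z - signedValue y) ≤ h z - h y` whenever
`signedValue y ≤ signedValue z`, and the gap between the labels gives the theorem.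
-/

theorem harmonic_descent {M : ℕ} {h V : List Bool → ℝ}
    (hharm : ∀ z : List Bool, 1 ≤ z.length → z.length < M →
      h (z ++ [false]) + h (z ++ [true]) + h z.dropLast = 3 * h z)
    (hV : ∀ z : List Bool, 1 ≤ z.length → z.length < M →
      V (z ++ [false]) + V (z ++ [true]) = V z)
    (hbdry : ∀ z : List Bool, z.length = M → h z = V z) (k : ℕ) :
    ∀ z : List Bool, 1 ≤ z.length → z.length + k = M →
      (2 ^ (k + 1) - 1) * h z = (2 ^ k - 1) * h z.dropLast + V z := by
  induction k with
  | zero =>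
    intro z _ hz
    rw [hbdry z hz]
    ring
  | succ k ih =>
    intro z hz1 hzk
    have hchild (b : Bool) :
        (2 ^ (k + 1) - 1) * h (z ++ [b]) = (2 ^ k - 1) * h z + V (z ++ [b]) := by
      simpa using ih (z ++ [b]) (by simp) (by simp; omega)
    linear_combination hchild false + hchild true - (2 ^ (k + 1) - 1) * hharm z hz1 (by omega)
      + hV z hz1 (by omega)

noncomputable def tailValue (z : List Bool) : ℝ :=
  ∑ ℓ ∈ Finset.Icc 2 z.length, 2 ^ (z.length - ℓ) * if z.getD (ℓ - 1) false then 1 else 0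

noncomputable def signedValue (z : List Bool) : ℝ :=
  if z.getD 0 false then tailValue z + 1 / 2 else -(tailValue z + 1 / 2)

theorem tailValue_concat {p : List Bool} (hp : p ≠ []) (a : Bool) :
    tailValue (p ++ [a]) = 2 * tailValue p + if a then 1 else 0 := by
  have hp1 : 1 ≤ p.length := List.length_pos_iff.mpr hp
  rw [tailValue, tailValue, List.length_append, List.length_singleton,
    Finset.sum_Icc_succ_top (by omega), Finset.mul_sum]
  congr 1
  · refine Finset.sum_congr rfl fun ℓ hℓ => ?_
    obtain ⟨h2, hℓp⟩ := Finset.mem_Icc.mp hℓ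
    rw [List.getD_append _ _ _ _ (by omega), show p.length + 1 - ℓ = p.length - ℓ + 1 by omega,
      pow_succ]
    ring
  · simp [List.getD]

theorem signedValue_concat {p : List Bool} (hp : p ≠ []) (a : Bool) :
    signedValue (p ++ [a]) = 2 * signedValue p + if a = p.getD 0 false then 1 / 2 else -1 / 2 := by
  rw [signedValue, signedValue, tailValue_concat hp,
    List.getD_append _ _ _ _ (List.length_pos_iff.mpr hp)]
  cases p.getD 0 false <;> cases a <;> norm_num <;> ring

theorem abs_signedValue_concat_sub {p : List Bool} (hp : p ≠ []) (a : Bool) :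
    |signedValue (p ++ [a]) - 2 * signedValue p| = 1 / 2 := by
  rw [signedValue_concat hp]
  split_ifs <;> norm_num

theorem signedValue_concat_false_add_true {p : List Bool} (hp : p ≠ []) :
    signedValue (p ++ [false]) + signedValue (p ++ [true]) = 4 * signedValue p := by
  rw [signedValue_concat hp, signedValue_concat hp]
  cases p.getD 0 false <;> norm_num <;> ring

theorem abs_signedValue_concat_sub_concat {p : List Bool} {a b : Bool} (hab : a ≠ b) :
    |signedValue (p ++ [a]) - signedValue (p ++ [b])| = 1 := by
  rcases eq_or_ne p [] with rfl | hp
  · cases a <;> cases b <;> simp_all [signedValue, tailValue] <;> norm_num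
  · rw [signedValue_concat hp, signedValue_concat hp]
    cases p.getD 0 false <;> cases a <;> cases b <;> simp_all <;> norm_num

theorem one_le_abs_signedValue_sub {z y : List Bool} (hl : z.length = y.length) (hne : z ≠ y) :
    1 ≤ |signedValue z - signedValue y| := by
  induction z using List.reverseRecOn generalizing y with
  | nil => exact absurd (List.length_eq_zero_iff.mp hl.symm).symm hne
  | append_singleton p a ih =>
    obtain ⟨q, b, rfl⟩ := (List.eq_nil_or_concat' y).resolve_left (by rintro rfl; simp at hl)
    have hpq : p.length = q.length := by simpa using hl
    by_cases hpq' : p = q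
    · subst hpq'
      exact (abs_signedValue_concat_sub_concat fun hab => hne (by rw [hab])).ge
    have hp : p ≠ [] := by
      rintro rfl
      exact hpq' (List.length_eq_zero_iff.mp hpq.symm).symm
    have hq : q ≠ [] := List.ne_nil_of_length_pos (hpq ▸ List.length_pos_iff.mpr hp)
    have hpa := abs_le.mp (abs_signedValue_concat_sub hp a).le
    have hqb := abs_le.mp (abs_signedValue_concat_sub hq b).le
    rcases le_abs'.mp (ih hpq hpq') with h | h <;> rw [le_abs'] <;> [left; right] <;> linarith

theorem signedValue_dropLast_le {z y : List Bool} (hl : z.length = y.length)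
    (hle : signedValue y ≤ signedValue z) : signedValue y.dropLast ≤ signedValue z.dropLast := by
  by_cases hpq : z.dropLast = y.dropLast
  · rw [hpq]
  obtain ⟨p, a, rfl⟩ := (List.eq_nil_or_concat' z).resolve_left
    (by rintro rfl; simp_all [eq_comm (a := 0), List.length_eq_zero_iff])
  obtain ⟨q, b, rfl⟩ := (List.eq_nil_or_concat' y).resolve_left (by rintro rfl; simp_all)
  rw [List.dropLast_concat, List.dropLast_concat] at hpq ⊢
  have hl' : p.length = q.length := by simpa using hl
  have hp : p ≠ [] := by
    rintro rfl
    exact hpq (List.length_eq_zero_iff.mp hl'.symm).symm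
  have hq : q ≠ [] := List.ne_nil_of_length_pos (hl' ▸ List.length_pos_iff.mpr hp)
  have hpa := abs_le.mp (abs_signedValue_concat_sub hp a).le
  have hqb := abs_le.mp (abs_signedValue_concat_sub hq b).le
  rcases le_abs'.mp (one_le_abs_signedValue_sub hl' hpq) with h | h <;> linarith

theorem two_pow_succ_sub_one_le_four_pow (k : ℕ) : (2 : ℝ) ^ (k + 1) - 1 ≤ 4 ^ k := by
  rw [show (4 : ℝ) ^ k = (2 ^ k) ^ 2 by rw [← pow_mul, mul_comm, pow_mul]; norm_num, pow_succ]
  nlinarith [sq_nonneg ((2 : ℝ) ^ k - 1)]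

theorem mul_sub_signedValue_le_sub {M : ℕ} {ε : ℝ} (hε : 0 ≤ ε) {h : List Bool → ℝ}
    (hharm : ∀ z : List Bool, 1 ≤ z.length → z.length < M →
      h (z ++ [false]) + h (z ++ [true]) + h z.dropLast = 3 * h z)
    (hbdry : ∀ z : List Bool, z.length = M → h z = ε * signedValue z) {n : ℕ} (hn : n ≤ M) :
    ∀ z y : List Bool, z.length = n → y.length = n → signedValue y ≤ signedValue z →
      ε * (signedValue z - signedValue y) ≤ h z - h y := by
  induction n with
  | zero =>
    intro z y hz hy _
    rw [List.length_eq_zero_iff.mp hz, List.length_eq_zero_iff.mp hy]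
    simp
  | succ n ih =>
    intro z y hz hy hle
    set k := M - (n + 1)
    have hdescent := harmonic_descent (V := fun z => ε * 4 ^ (M - z.length) * signedValue z)
      hharm (fun z hz1 hzM => by
        simp only [List.length_append, List.length_singleton]
        rw [show M - z.length = M - (z.length + 1) + 1 by omega, pow_succ]
        linear_combination ε * 4 ^ (M - (z.length + 1)) *
          signedValue_concat_false_add_true (List.ne_nil_of_length_pos hz1))
      (fun z hz => by simp [hbdry z hz, hz]) k
    have hz' := hdescent z (by omega) (by omega)
    have hy' := hdescent y (by omega) (by omega)
    simp only [hz, hy] at hz' hy'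
    have hmono := signedValue_dropLast_le (hz.trans hy.symm) hle
    have hparent : 0 ≤ h z.dropLast - h y.dropLast :=
      (mul_nonneg hε (sub_nonneg.mpr hmono)).trans
        (ih (by omega) _ _ (by simp [hz]) (by simp [hy]) hmono)
    have hc : (0 : ℝ) < 2 ^ (k + 1) - 1 := by
      have : (1 : ℝ) < 2 ^ (k + 1) := one_lt_pow₀ (by norm_num) (by omega)
      linarith
    have hw : 0 ≤ ε * (signedValue z - signedValue y) := mul_nonneg hε (sub_nonneg.mpr hle)
    refine le_of_mul_le_mul_left ?_ hc
    calc (2 ^ (k + 1) - 1) * (ε * (signedValue z - signedValue y))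
        ≤ 4 ^ k * (ε * (signedValue z - signedValue y)) :=
          mul_le_mul_of_nonneg_right (two_pow_succ_sub_one_le_four_pow k) hw
      _ ≤ (2 ^ k - 1) * (h z.dropLast - h y.dropLast)
            + 4 ^ k * (ε * (signedValue z - signedValue y)) := by
          refine le_add_of_nonneg_left (mul_nonneg ?_ hparent)
          linarith [one_le_pow₀ (M₀ := ℝ) (a := 2) (n := k) (by norm_num)]
      _ = (2 ^ (k + 1) - 1) * (h z - h y) := by linear_combination hy' - hz'

theorem stmt_17_general (M : ℕ) (ε : ℝ) (hε : 0 < ε) (h : List Bool → ℝ)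
    (hharm : ∀ z : List Bool, 1 ≤ z.length → z.length < M →
      h (z ++ [false]) + h (z ++ [true]) + h z.dropLast = 3 * h z)
    (hbdry : ∀ z : List Bool, z.length = M →
      h z = if z.getD 0 false
        then ε * (∑ ℓ ∈ Finset.Icc 2 M, 2 ^ (M - ℓ) * (if z.getD (ℓ - 1) false then (1:ℝ) else 0))
              + ε / 2
        else -(ε * (∑ ℓ ∈ Finset.Icc 2 M, 2 ^ (M - ℓ) * (if z.getD (ℓ - 1) false then (1:ℝ) else 0)))
              - ε / 2) :
    ∀ n : ℕ, 1 ≤ n → n ≤ M → ∀ z y : List Bool, z.length = n → y.length = n → z ≠ y →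
      ε ≤ |h z - h y| := by
  have hbdry' (z : List Bool) (hz : z.length = M) : h z = ε * signedValue z := by
    rw [hbdry z hz, signedValue, tailValue, hz]
    split_ifs <;> ring
  intro n _ hnM z y hz hy hne
  have hgap := one_le_abs_signedValue_sub (hz.trans hy.symm) hne
  wlog hle : signedValue y ≤ signedValue z generalizing z y
  · rw [abs_sub_comm] at hgap ⊢
    exact this y z hy hz hne.symm hgap (le_of_not_ge hle)
  calc ε = ε * 1 := (mul_one ε).symm
    _ ≤ ε * (signedValue z - signedValue y) := by
      rw [abs_of_nonneg (sub_nonneg.mpr hle)] at hgap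
      gcongr
    _ ≤ h z - h y := mul_sub_signedValue_le_sub hε.le hharm hbdry' hnM z y hz hy hle
    _ ≤ |h z - h y| := le_abs_self _

theorem stmt_17 (M : ℕ) (hM : 2 ≤ M) (ε : ℝ) (hε : 0 < ε) (h : List Bool → ℝ)
    (hroot : h [] = 0)
    (hharm : ∀ z : List Bool, 1 ≤ z.length → z.length < M →
      h (z ++ [false]) + h (z ++ [true]) + h z.dropLast = 3 * h z)
    (hbdry : ∀ z : List Bool, z.length = M →
      h z = if z.getD 0 false
        then ε * (∑ ℓ ∈ Finset.Icc 2 M, 2 ^ (M - ℓ) * (if z.getD (ℓ - 1) false then (1:ℝ) else 0))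
              + ε / 2
        else -(ε * (∑ ℓ ∈ Finset.Icc 2 M, 2 ^ (M - ℓ) * (if z.getD (ℓ - 1) false then (1:ℝ) else 0)))
              - ε / 2) :
    ∀ n : ℕ, 1 ≤ n → n ≤ M → ∀ z y : List Bool, z.length = n → y.length = n → z ≠ y →
      ε ≤ |h z - h y| :=
  stmt_17_general M ε hε h hharm hbdry
end

section
/- Let $S_1, S_2 \in \mathbb{R}$ and suppose real numbers $(a(x))_{x}$ indexed by vertices of the binary tree of depth $M$ satisfy $a(z) = a(z0)+a(z1)$ at every vertex of depth $< M$ (with $a(\emptyset) = 0$), and the leaf sums over the two subtrees rooted at $0$ and $1$ equal $S_1$ and $S_2$ respectively. Then $\sum_{n=1}^M \sum_{x \in \{0,1\}^n} \frac{1}{2} a(x)^2 \ge \frac{S_1^2 + S_2^2}{2(2^M - 1)^2}$. -/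
/-!
Peeling off the root, the leaf sum over the depth-`(m+1)` subtree below a vertex `z` is
`2^(m+1) a(z)` plus the leaf sums over the depth-`m` subtrees below its two children; with the
compatibility relation `a(z) = a(z0) + a(z1)`, induction gives `(1 + 2 + ⋯ + 2^m) a(z)
= (2^(m+1) - 1) a(z)`. Hence `S_i = (2^M - 1) a(i)`, and the first level
`½ (a(0)² + a(1)²)` of the energy already equals the claimed bound.
-/

open Finset

section

variable {α β : Type*} [Fintype α] [AddCommMonoid β]

theorem Fintype.sum_fun_fin_succ (m : ℕ) (f : (Fin (m + 1) → α) → β) :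
    ∑ y, f y = ∑ b, ∑ y : Fin m → α, f (Fin.cons b y) :=
  (Fintype.sum_equiv (Fin.consEquiv fun _ => α) _ _ fun _ => rfl).symm.trans
    (Fintype.sum_prod_type _)

def subtreeLeafSum (a : List α → β) (z : List α) (m : ℕ) : β :=
  ∑ y : Fin m → α, ∑ j ∈ range (m + 1), a (z ++ (List.ofFn y).take j)

theorem subtreeLeafSum_succ (a : List α → β) (z : List α) (m : ℕ) :
    subtreeLeafSum a z (m + 1)
      = Fintype.card α ^ (m + 1) • a z + ∑ b, subtreeLeafSum a (z ++ [b]) m := by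
  have hroot : ∀ y : Fin (m + 1) → α,
      ∑ j ∈ range (m + 2), a (z ++ (List.ofFn y).take j)
        = a z + ∑ j ∈ range (m + 1),
            a ((z ++ [y 0]) ++ (List.ofFn fun i => y i.succ).take j) := by
    intro y
    rw [sum_range_succ', add_comm]
    simp [List.ofFn_succ]
  simp only [subtreeLeafSum, hroot, sum_add_distrib, sum_const, card_univ, Fintype.card_fun,
    Fintype.card_fin]
  rw [Fintype.sum_fun_fin_succ]
  simp

theorem subtreeLeafSum_eq {a : List α → β} {N : ℕ}
    (hsplit : ∀ w : List α, w.length < N → a w = ∑ b, a (w ++ [b])) :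
    ∀ (m : ℕ) (z : List α), z.length + m ≤ N →
      subtreeLeafSum a z m = (∑ i ∈ range (m + 1), Fintype.card α ^ i) • a z
  | 0, z, _ => by simp [subtreeLeafSum]
  | m + 1, z, hz => by
    have hchild : ∀ b, subtreeLeafSum a (z ++ [b]) m
        = (∑ i ∈ range (m + 1), Fintype.card α ^ i) • a (z ++ [b]) := fun b =>
      subtreeLeafSum_eq hsplit m _ (by simp; omega)
    rw [subtreeLeafSum_succ, Fintype.sum_congr _ _ hchild, ← smul_sum, ← hsplit z (by omega),
      ← add_smul, sum_range_succ _ (m + 1), add_comm]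

end

theorem subtreeLeafSum_bool_eq {a : List Bool → ℝ} {N : ℕ}
    (hcompat : ∀ w : List Bool, w.length < N → a w = a (w ++ [false]) + a (w ++ [true]))
    (m : ℕ) (z : List Bool) (hz : z.length + m ≤ N) :
    subtreeLeafSum a z m = (2 ^ (m + 1) - 1) * a z := by
  have hsplit : ∀ w : List Bool, w.length < N → a w = ∑ b, a (w ++ [b]) := fun w hw => by
    rw [Fintype.sum_bool, add_comm, hcompat w hw]
  have hgeom : ∑ i ∈ range (m + 1), (2:ℝ) ^ i = 2 ^ (m + 1) - 1 := by
    rw [← geom_sum_mul]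
    norm_num
  rw [subtreeLeafSum_eq hsplit m z hz, nsmul_eq_mul, Fintype.card_bool]
  push_cast
  rw [hgeom]

theorem sum_Icc_one_take_cons {α β : Type*} [AddCommMonoid β] (f : List α → β) (b : α)
    (l : List α) (m : ℕ) :
    ∑ j ∈ Icc 1 (m + 1), f ((b :: l).take j) = ∑ j ∈ range (m + 1), f ([b] ++ l.take j) := by
  rw [← Ico_add_one_right_eq_Icc, sum_Ico_eq_sum_range]
  simp [add_comm 1, List.take_succ_cons]

theorem sum_fin_one_bool {β : Type*} [AddCommMonoid β] (f : List Bool → β) :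
    ∑ x : Fin 1 → Bool, f (List.ofFn x) = f [false] + f [true] := by
  rw [Fintype.sum_fun_fin_succ, Fintype.sum_bool, add_comm]
  simp [Subsingleton.elim _ (Fin.elim0 : Fin 0 → Bool)]

theorem stmt_19_general (M : ℕ) (hM : 1 ≤ M) (a : List Bool → ℝ)
    (hcompat : ∀ z : List Bool, z.length < M → a z = a (z ++ [false]) + a (z ++ [true]))
    (S1 S2 : ℝ)
    (hS1 : S1 = ∑ y : Fin (M - 1) → Bool,
        ∑ j ∈ Finset.Icc 1 M, a ((false :: List.ofFn y).take j))
    (hS2 : S2 = ∑ y : Fin (M - 1) → Bool,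
        ∑ j ∈ Finset.Icc 1 M, a ((true :: List.ofFn y).take j)) :
    (S1 ^ 2 + S2 ^ 2) / (2 * ((2:ℝ) ^ M - 1) ^ 2)
      ≤ ∑ n ∈ Finset.Icc 1 M, ∑ x : Fin n → Bool, (1 / 2) * (a (List.ofFn x)) ^ 2 := by
  obtain ⟨m, rfl⟩ : ∃ m, M = m + 1 := ⟨M - 1, by omega⟩
  change S1 = ∑ y : Fin m → Bool, _ at hS1
  change S2 = ∑ y : Fin m → Bool, _ at hS2
  have hS : ∀ b, ∑ y : Fin m → Bool, ∑ j ∈ Icc 1 (m + 1), a ((b :: List.ofFn y).take j)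
      = ((2:ℝ) ^ (m + 1) - 1) * a [b] := fun b => by
    simp only [sum_Icc_one_take_cons]
    exact subtreeLeafSum_bool_eq hcompat m [b] (by simp [add_comm])
  have hpos : (0:ℝ) < 2 ^ (m + 1) - 1 := sub_pos.2 (one_lt_pow₀ one_lt_two m.succ_ne_zero)
  calc (S1 ^ 2 + S2 ^ 2) / (2 * ((2:ℝ) ^ (m + 1) - 1) ^ 2)
      = ∑ x : Fin 1 → Bool, (1 / 2) * (a (List.ofFn x)) ^ 2 := by
        rw [sum_fin_one_bool (fun l => (1 / 2) * a l ^ 2), hS1, hS2, hS, hS]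
        field_simp
    _ ≤ ∑ n ∈ Icc 1 (m + 1), ∑ x : Fin n → Bool, (1 / 2) * (a (List.ofFn x)) ^ 2 :=
        single_le_sum (f := fun n => ∑ x : Fin n → Bool, (1 / 2) * (a (List.ofFn x)) ^ 2)
          (fun n _ => by positivity) (by simp)

theorem stmt_19 (M : ℕ) (hM : 1 ≤ M) (a : List Bool → ℝ) (ha0 : a [] = 0)
    (hcompat : ∀ z : List Bool, z.length < M → a z = a (z ++ [false]) + a (z ++ [true]))
    (S1 S2 : ℝ)
    (hS1 : S1 = ∑ y : Fin (M - 1) → Bool,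
        ∑ j ∈ Finset.Icc 1 M, a ((false :: List.ofFn y).take j))
    (hS2 : S2 = ∑ y : Fin (M - 1) → Bool,
        ∑ j ∈ Finset.Icc 1 M, a ((true :: List.ofFn y).take j)) :
    (S1 ^ 2 + S2 ^ 2) / (2 * ((2:ℝ) ^ M - 1) ^ 2)
      ≤ ∑ n ∈ Finset.Icc 1 M, ∑ x : Fin n → Bool, (1 / 2) * (a (List.ofFn x)) ^ 2 :=
  stmt_19_general M hM a hcompat S1 S2 hS1 hS2
end
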